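/- arXiv:2010.03275 — 3 statements merged into one kernel-verified Lean document; each statement's English description precedes it below -/
import Mathlib

section
/- Let 1 ≤ k < n and let f : R^n → [0,∞] be defined by f(x) = (1+|x|)^{-k} (log(2+|x|))^{-δ} where k/n < δ < 1. Then for every affine k-plane P in R^n (i.e., every translate x + θ of a k-dimensional linear subspace θ), the integral of f over P with respect to k-dimensional Lebesgue measure is infinite. -/
/-!
The integrand dominates the radial function `z ↦ w (‖x‖ + ‖z‖)`, where `w` is the decreasing
profile `t ↦ (1 + t)^(-k) (log (2 + t))^(-δ)`, because `‖x + φ z‖ ≤ ‖x‖ + ‖z‖`. In polar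
coordinates this radial function is integrable iff `r ↦ r^(k-1) w (‖x‖ + r)` is integrable on
`(0, ∞)`. At infinity the latter is bounded below by a multiple of `s⁻¹ (log s)^(-δ)`,
`s = 2 + ‖x‖ + r`, which is the derivative of `(log s)^(1-δ) / (1 - δ)`, and that tends to `∞`
since `δ < 1`.
-/

open MeasureTheory Real Set Filter Asymptotics

lemma not_integrableOn_Ioi_of_inv_mul_log_rpow_isBigO {δ b c : ℝ} {g : ℝ → ℝ} (hδ : δ < 1)
    (hg : (fun t => (b + t)⁻¹ * log (b + t) ^ (-δ)) =O[atTop] g) :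
    ¬IntegrableOn g (Ioi c) := by
  have hderiv : ∀ᶠ t in atTop, HasDerivAt (fun t => log (b + t) ^ (1 - δ))
      ((1 - δ) * ((b + t)⁻¹ * log (b + t) ^ (-δ))) t := by
    filter_upwards [eventually_gt_atTop (1 - b)] with t ht
    have hlog : log (b + t) ≠ 0 := (log_pos (by linarith)).ne'
    convert (((hasDerivAt_id' t).const_add b).log (by linarith)).rpow_const (p := 1 - δ)
      (Or.inl hlog) using 1
    ring_nf
  refine not_integrableOn_of_tendsto_norm_atTop_of_deriv_isBigO_filter atTop (Ioi_mem_atTop c)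
    (hderiv.mono fun t ht => ht.differentiableAt) ?_ ?_
  · exact tendsto_norm_atTop_atTop.comp <| (tendsto_rpow_atTop (by linarith)).comp <|
      tendsto_log_atTop.comp (tendsto_atTop_add_const_left _ b tendsto_id)
  · exact (EventuallyEq.isBigO (hderiv.mono fun t ht => ht.deriv)).trans (hg.const_mul_left _)

noncomputable def logWeight (d : ℕ) (δ t : ℝ) : ℝ := (1 + t) ^ (-(d : ℝ)) * log (2 + t) ^ (-δ)

lemma measurable_logWeight (d : ℕ) (δ : ℝ) : Measurable (logWeight d δ) := by
  unfold logWeight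
  fun_prop

lemma logWeight_nonneg (d : ℕ) (δ : ℝ) {t : ℝ} (ht : 0 ≤ t) : 0 ≤ logWeight d δ t :=
  mul_nonneg (rpow_nonneg (by linarith) _) (rpow_nonneg (log_nonneg (by linarith)) _)

lemma logWeight_le_logWeight (d : ℕ) {δ s t : ℝ} (hδ : 0 ≤ δ) (hs : 0 ≤ s) (hst : s ≤ t) :
    logWeight d δ t ≤ logWeight d δ s :=
  mul_le_mul (rpow_le_rpow_of_nonpos (by linarith) (by linarith) (by simp))
    (rpow_le_rpow_of_nonpos (log_pos (by linarith)) (log_le_log (by linarith) (by linarith))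
      (by linarith))
    (rpow_nonneg (log_nonneg (by linarith)) _) (rpow_nonneg (by linarith) _)

lemma inv_mul_log_rpow_isBigO_pow_mul_logWeight (d : ℕ) (δ a : ℝ) :
    (fun t => (2 + a + t)⁻¹ * log (2 + a + t) ^ (-δ)) =O[atTop]
      fun t => t ^ d * logWeight (d + 1) δ (a + t) := by
  refine IsBigO.of_bound (2 ^ d) ?_
  filter_upwards [eventually_ge_atTop (1 + |a|)] with t ht
  have ha : -|a| ≤ a ∧ a ≤ |a| := abs_le.mp le_rfl
  have ht0 : 0 < t := by linarith [abs_nonneg a]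
  have hu : 2 ≤ 1 + a + t := by linarith
  have hlog : 0 < log (2 + a + t) ^ (-δ) := rpow_pos_of_pos (log_pos (by linarith)) _
  have hpow_le : (1 + a + t) ^ (d + 1) ≤ (2 * t) ^ d * (2 + a + t) :=
    calc (1 + a + t) ^ (d + 1) = (1 + a + t) ^ d * (1 + a + t) := pow_succ _ _
      _ ≤ (2 * t) ^ d * (2 + a + t) :=
        mul_le_mul (pow_le_pow_left₀ (by linarith) (by linarith) d) (by linarith) (by linarith)
          (pow_nonneg (by linarith) d)
  have hpow : (1 + a + t) ^ (-((d + 1 : ℕ) : ℝ)) = ((1 + a + t) ^ (d + 1))⁻¹ := by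
    rw [rpow_neg (by linarith), rpow_natCast]
  have hbound : (2 + a + t)⁻¹ ≤ (2 * t) ^ d / (1 + a + t) ^ (d + 1) := by
    rw [le_div_iff₀ (by positivity), inv_mul_le_iff₀ (by linarith), mul_comm]
    exact hpow_le
  calc ‖(2 + a + t)⁻¹ * log (2 + a + t) ^ (-δ)‖
      = (2 + a + t)⁻¹ * log (2 + a + t) ^ (-δ) :=
        norm_of_nonneg (mul_nonneg (inv_nonneg.mpr (by linarith)) hlog.le)
    _ ≤ (2 * t) ^ d / (1 + a + t) ^ (d + 1) * log (2 + a + t) ^ (-δ) := by gcongr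
    _ = 2 ^ d * ‖t ^ d * logWeight (d + 1) δ (a + t)‖ := by
      rw [logWeight, ← add_assoc, ← add_assoc, hpow, norm_of_nonneg (by positivity)]
      ring

lemma not_integrable_logWeight_add_norm {E : Type*} [NormedAddCommGroup E] [NormedSpace ℝ E]
    [FiniteDimensional ℝ E] [Nontrivial E] [MeasurableSpace E] [BorelSpace E]
    (μ : Measure E) [μ.IsAddHaarMeasure] {δ : ℝ} (hδ : δ < 1) (a : ℝ) :
    ¬Integrable (fun z : E => logWeight (Module.finrank ℝ E) δ (a + ‖z‖)) μ := by
  obtain ⟨d, hd⟩ : ∃ d, Module.finrank ℝ E = d + 1 :=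
    Nat.exists_eq_succ_of_ne_zero Module.finrank_pos.ne'
  rw [integrable_fun_norm_addHaar μ (f := fun r => logWeight _ δ (a + r)), hd, Nat.add_sub_cancel]
  simp only [smul_eq_mul]
  exact not_integrableOn_Ioi_of_inv_mul_log_rpow_isBigO hδ
    (inv_mul_log_rpow_isBigO_pow_mul_logWeight d δ a)

theorem kplane_integral_infinite_general (n k : ℕ) (hk : 1 ≤ k) (δ : ℝ)
    (hδl : (k : ℝ) / n < δ) (hδu : δ < 1)
    (x : EuclideanSpace ℝ (Fin n))
    (φ : EuclideanSpace ℝ (Fin k) →ₗᵢ[ℝ] EuclideanSpace ℝ (Fin n)) :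
    (∫⁻ z : EuclideanSpace ℝ (Fin k),
        ENNReal.ofReal ((1 + ‖x + φ z‖) ^ (-(k : ℝ)) *
          (Real.log (2 + ‖x + φ z‖)) ^ (-δ))) = ⊤ := by
  have hδ : 0 ≤ δ := (div_nonneg k.cast_nonneg n.cast_nonneg).trans hδl.le
  have : Nontrivial (EuclideanSpace ℝ (Fin k)) :=
    Module.nontrivial_of_finrank_pos (by rwa [finrank_euclideanSpace_fin])
  have hradial := not_integrable_logWeight_add_norm
    (volume : Measure (EuclideanSpace ℝ (Fin k))) hδu ‖x‖
  rw [finrank_euclideanSpace_fin] at hradial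
  have hmeas : Measurable fun z => logWeight k δ ‖x + φ z‖ :=
    (measurable_logWeight k δ).comp (by fun_prop)
  change ∫⁻ z, ENNReal.ofReal (logWeight k δ ‖x + φ z‖) = ⊤
  rw [← not_ne_iff, lintegral_ofReal_ne_top_iff_integrable hmeas.aestronglyMeasurable
    (ae_of_all _ fun z => logWeight_nonneg k δ (norm_nonneg _))]
  refine fun hint => hradial (hint.mono' ((measurable_logWeight k δ).comp
    (by fun_prop)).aestronglyMeasurable (ae_of_all _ fun z => ?_))
  rw [norm_of_nonneg (logWeight_nonneg k δ (by positivity))]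
  exact logWeight_le_logWeight k hδ (norm_nonneg _)
    (by simpa only [φ.norm_map] using norm_add_le x (φ z))

/-- Let `1 ≤ k < n` and `f(x) = (1+|x|)^{-k} (log(2+|x|))^{-δ}` with `k/n < δ < 1`.
Then the integral of `f` over every affine `k`-plane (parametrized isometrically as
`x + φ(ℝ^k)` for a linear isometry `φ : ℝ^k → ℝ^n`) with respect to `k`-dimensional
Lebesgue measure is infinite. -/
theorem kplane_integral_infinite (n k : ℕ) (hk : 1 ≤ k) (hkn : k < n) (δ : ℝ)
    (hδl : (k : ℝ) / n < δ) (hδu : δ < 1)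
    (x : EuclideanSpace ℝ (Fin n))
    (φ : EuclideanSpace ℝ (Fin k) →ₗᵢ[ℝ] EuclideanSpace ℝ (Fin n)) :
    (∫⁻ z : EuclideanSpace ℝ (Fin k),
        ENNReal.ofReal ((1 + ‖x + φ z‖) ^ (-(k : ℝ)) *
          (Real.log (2 + ‖x + φ z‖)) ^ (-δ))) = ⊤ :=
  kplane_integral_infinite_general n k hk δ hδl hδu x φ
end

section
/- Let 1 < p < ∞, α = n/p, and define B_α f(ω) = ∫_0^∞ f(tω) t^{α-1} dt for ω ∈ S^{n-1}. Then ‖B_α f‖_{L^p(S^{n-1})} ≤ C ‖f‖_{L^{p,1}(R^n)} for all measurable f : R^n → C, with C independent of f. -/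
open MeasureTheory Metric Set Real
open scoped ENNReal

/-- The Lorentz `L^{p,1}` (quasi-)norm of `f` with respect to a measure `μ`, expressed
through the distribution function: `‖f‖_{p,1} = ∫₀^∞ μ{|f| > l}^{1/p} dl`. -/
noncomputable def lorentzNorm₁ {X : Type*} [MeasurableSpace X] (μ : Measure X)
    (p : ℝ) (f : X → ℂ) : ℝ≥0∞ :=
  ∫⁻ l in Ioi (0 : ℝ), (μ {x | l < ‖f x‖}) ^ (1 / p)

/-!
Bound `‖B_α f(ω)‖` by `∫₀^∞ |f(tω)| t^{α-1} dt` and rewrite this by the layer-cake formula as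
`∫₀^∞ m_ω(l) dl`, where `m_ω(l)` is the `t^{α-1} dt`-measure of the ray set
`A_ω(l) = {t > 0 : l < |f(tω)|}`. Minkowski's integral inequality moves the `L^p(S^{n-1})` norm
inside the `l`-integral. On a single ray, a set `A ⊆ (0, ∞)` with `∫_A t^{n-1} dt = m` has
`∫_A t^{α-1} dt ≤ C m^{α/n} = C m^{1/p}`, the worst case being an interval `(0, r)`. Hence
`∫_{S^{n-1}} m_ω(l)^p dω ≤ C^p ∫_{S^{n-1}} ∫_{A_ω(l)} t^{n-1} dt dω = C^p |{l < |f|}|` by polar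
coordinates, and integrating the `p`-th roots over `l` gives `C ‖f‖_{L^{p,1}}`.
-/

namespace ENNReal

theorem rpow_one_div_le_of_le_mul_rpow {a b : ℝ≥0∞} {p q : ℝ} (hpq : p.HolderConjugate q)
    (ha : a ≠ ⊤) (h : a ≤ b * a ^ (1 / q)) : a ^ (1 / p) ≤ b := by
  rcases eq_or_ne a 0 with rfl | ha0
  · simp [hpq.pos]
  have hsplit : a = a ^ (1 / p) * a ^ (1 / q) := by
    rw [← rpow_add_of_nonneg _ _ (one_div_pos.2 hpq.pos).le (one_div_pos.2 hpq.symm.pos).le,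
      one_div, one_div, hpq.inv_add_inv_eq_one, rpow_one]
  have hq0 : a ^ (1 / q) ≠ 0 := (rpow_pos (pos_iff_ne_zero.2 ha0) ha).ne'
  have hqtop : a ^ (1 / q) ≠ ⊤ := rpow_ne_top_of_nonneg (one_div_pos.2 hpq.symm.pos).le ha
  rw [← ENNReal.mul_le_mul_iff_left hq0 hqtop, ← hsplit]
  exact h

end ENNReal

section Minkowski

variable {X Y : Type*} [MeasurableSpace X] [MeasurableSpace Y]

theorem lintegral_Lp_lintegral_le (μ : Measure X) [IsFiniteMeasure μ] (ν : Measure Y) [SFinite ν]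
    {p : ℝ} (hp : 1 < p) {G : X → Y → ℝ≥0∞} (hG : Measurable (Function.uncurry G)) :
    (∫⁻ x, (∫⁻ y, G x y ∂ν) ^ p ∂μ) ^ (1 / p) ≤ ∫⁻ y, (∫⁻ x, G x y ^ p ∂μ) ^ (1 / p) ∂ν := by
  have hp0 : 0 < p := one_pos.trans hp
  have hpq := Real.HolderConjugate.conjExponent hp
  set q := p.conjExponent
  set F : X → ℝ≥0∞ := fun x ↦ ∫⁻ y, G x y ∂ν
  set J := ∫⁻ y, (∫⁻ x, G x y ^ p ∂μ) ^ (1 / p) ∂ν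
  have hF : Measurable F := hG.lintegral_prod_right'
  -- Truncating `F` at height `k` makes `∫ F ^ p` finite, so that Hölder's inequality
  -- can be divided by it.
  have htrunc (k : ℕ) : ∫⁻ x, min (F x) k ^ p ∂μ ≤ J ^ p := by
    set Fk : X → ℝ≥0∞ := fun x ↦ min (F x) k
    have hFk : Measurable Fk := hF.min measurable_const
    have hfin : ∫⁻ x, Fk x ^ p ∂μ ≠ ⊤ := by
      refine ne_top_of_le_ne_top (b := ∫⁻ _, (k : ℝ≥0∞) ^ p ∂μ) ?_
        (lintegral_mono fun x ↦ ENNReal.rpow_le_rpow (min_le_right _ _) hp0.le)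
      rw [lintegral_const]
      exact ENNReal.mul_ne_top (ENNReal.rpow_ne_top_of_nonneg hp0.le (ENNReal.natCast_ne_top k))
        (measure_ne_top μ _)
    have hpow : ∀ x, (Fk x ^ (p - 1)) ^ q = Fk x ^ p := fun x ↦ by
      rw [← ENNReal.rpow_mul, hpq.sub_one_mul_conj]
    have holder : ∫⁻ x, Fk x ^ p ∂μ ≤ J * (∫⁻ x, Fk x ^ p ∂μ) ^ (1 / q) :=
      calc ∫⁻ x, Fk x ^ p ∂μ = ∫⁻ x, Fk x * Fk x ^ (p - 1) ∂μ := by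
            refine lintegral_congr fun x ↦ ?_
            conv_lhs => rw [show p = 1 + (p - 1) by ring]
            rw [ENNReal.rpow_add_of_nonneg _ _ zero_le_one (by linarith), ENNReal.rpow_one]
          _ ≤ ∫⁻ x, F x * Fk x ^ (p - 1) ∂μ :=
            lintegral_mono fun x ↦ mul_le_mul_left (min_le_left _ _) _
          _ = ∫⁻ y, ∫⁻ x, G x y * Fk x ^ (p - 1) ∂μ ∂ν := by
            rw [← lintegral_lintegral_swap
              (hG.mul ((hFk.pow_const (p - 1)).comp measurable_fst)).aemeasurable]
            exact lintegral_congr fun x ↦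
              (lintegral_mul_const _ (hG.comp measurable_prodMk_left)).symm
          _ ≤ ∫⁻ y, (∫⁻ x, G x y ^ p ∂μ) ^ (1 / p) * (∫⁻ x, Fk x ^ p ∂μ) ^ (1 / q) ∂ν := by
            refine lintegral_mono fun y ↦ ?_
            simp_rw [← hpow]
            exact ENNReal.lintegral_mul_le_Lp_mul_Lq μ hpq
              (hG.comp measurable_prodMk_right).aemeasurable (hFk.pow_const _).aemeasurable
          _ = J * (∫⁻ x, Fk x ^ p ∂μ) ^ (1 / q) :=
            lintegral_mul_const _ ((hG.pow_const p).lintegral_prod_left'.pow_const _)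
    rw [← ENNReal.rpow_inv_le_iff hp0, ← one_div]
    exact ENNReal.rpow_one_div_le_of_le_mul_rpow hpq hfin holder
  have hsup (x : X) : F x ^ p = ⨆ k : ℕ, min (F x) k ^ p := by
    conv_lhs => rw [← inf_top_eq (F x), ← ENNReal.iSup_natCast, inf_iSup_eq]
    exact (ENNReal.orderIsoRpow p hp0).map_iSup _
  have hmono : Monotone fun (k : ℕ) x ↦ min (F x) k ^ p := fun k l hkl x ↦
    ENNReal.rpow_le_rpow (min_le_min le_rfl (Nat.cast_le.2 hkl)) hp0.le
  rw [one_div, ENNReal.rpow_inv_le_iff hp0, lintegral_congr hsup,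
    lintegral_iSup (fun k ↦ (hF.min measurable_const).pow_const p) hmono]
  exact iSup_le htrunc

end Minkowski

section PowerWeight

variable {α β : ℝ} {A : Set ℝ}

theorem setLIntegral_rpow_sub_one_le_add (hα : 0 < α) (hαβ : α ≤ β) (hA : A ⊆ Ioi 0) {r : ℝ}
    (hr : 0 < r) :
    ∫⁻ t in A, ENNReal.ofReal (t ^ (α - 1)) ≤
      ENNReal.ofReal (r ^ α / α) +
        ENNReal.ofReal (r ^ (α - β)) * ∫⁻ t in A, ENNReal.ofReal (t ^ (β - 1)) := by
  have hsplit : A ⊆ Ioc (0 : ℝ) r ∪ (A ∩ Ioi r) := fun t ht ↦ by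
    rcases le_or_gt t r with htr | htr
    exacts [Or.inl ⟨hA ht, htr⟩, Or.inr ⟨ht, htr⟩]
  have hinit :
      ∫⁻ t in Ioc (0 : ℝ) r, ENNReal.ofReal (t ^ (α - 1)) = ENNReal.ofReal (r ^ α / α) := by
    rw [← ofReal_integral_eq_lintegral_ofReal
      (intervalIntegral.intervalIntegrable_rpow' (by linarith)).1,
      ← intervalIntegral.integral_of_le hr.le, integral_rpow (Or.inl (by linarith)),
      sub_add_cancel, zero_rpow hα.ne', sub_zero]
    filter_upwards [ae_restrict_mem measurableSet_Ioc] with t ht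
    exact rpow_nonneg ht.1.le _
  have htail : ∀ t ∈ A ∩ Ioi r, ENNReal.ofReal (t ^ (α - 1)) ≤
      ENNReal.ofReal (r ^ (α - β)) * ENNReal.ofReal (t ^ (β - 1)) := by
    rintro t ⟨-, hrt : r < t⟩
    have ht : 0 < t := hr.trans hrt
    rw [← ENNReal.ofReal_mul (rpow_nonneg hr.le _)]
    refine ENNReal.ofReal_le_ofReal ?_
    calc t ^ (α - 1) = t ^ (α - β) * t ^ (β - 1) := by rw [← rpow_add ht]; ring_nf
      _ ≤ r ^ (α - β) * t ^ (β - 1) :=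
        mul_le_mul_of_nonneg_right (rpow_le_rpow_of_nonpos hr hrt.le (by linarith))
          (rpow_nonneg ht.le _)
  calc ∫⁻ t in A, ENNReal.ofReal (t ^ (α - 1))
      ≤ (∫⁻ t in Ioc (0 : ℝ) r, ENNReal.ofReal (t ^ (α - 1))) +
          ∫⁻ t in A ∩ Ioi r, ENNReal.ofReal (t ^ (α - 1)) :=
        (lintegral_mono_set hsplit).trans (lintegral_union_le _ _ _)
    _ ≤ ENNReal.ofReal (r ^ α / α) +
          ∫⁻ t in A ∩ Ioi r, ENNReal.ofReal (r ^ (α - β)) * ENNReal.ofReal (t ^ (β - 1)) := by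
        rw [hinit]
        exact add_le_add_right (setLIntegral_mono (by fun_prop) htail) _
    _ ≤ _ := by
        rw [lintegral_const_mul _ (by fun_prop)]
        gcongr
        exact inter_subset_left

theorem setLIntegral_rpow_sub_one_le (hα : 0 < α) (hαβ : α ≤ β) (hA : MeasurableSet A)
    (hA0 : A ⊆ Ioi 0) :
    ∫⁻ t in A, ENNReal.ofReal (t ^ (α - 1)) ≤
      ENNReal.ofReal (1 / α + 1) * (∫⁻ t in A, ENNReal.ofReal (t ^ (β - 1))) ^ (α / β) := by
  have hβ : 0 < β := hα.trans_le hαβ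
  set m := ∫⁻ t in A, ENNReal.ofReal (t ^ (β - 1))
  rcases eq_top_or_lt_top m with htop | hfin
  · rw [htop, ENNReal.top_rpow_of_pos (by positivity), ENNReal.mul_top (by simp; positivity)]
    exact le_top
  rcases eq_or_ne m 0 with hzero | hpos
  · have hnull : volume.restrict A = 0 := by
      rw [lintegral_eq_zero_iff (by fun_prop)] at hzero
      refine ae_eq_bot.1 (Filter.eventually_false_iff_eq_bot.1 ?_)
      filter_upwards [ae_restrict_mem hA, hzero] with t ht htzero
      exact (ENNReal.ofReal_pos.2 (rpow_pos_of_pos (hA0 ht) _)).ne' htzero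
    simp [hnull]
  -- The bound is optimised by splitting at the `r` with `r ^ β = m`.
  set M := m.toReal
  have hM : 0 < M := ENNReal.toReal_pos hpos hfin.ne
  have hmM : m = ENNReal.ofReal M := (ENNReal.ofReal_toReal hfin.ne).symm
  have hr : 0 < M ^ (1 / β) := rpow_pos_of_pos hM _
  have hrα : (M ^ (1 / β)) ^ α = M ^ (α / β) := by
    rw [← rpow_mul hM.le]; ring_nf
  have hrαβ : (M ^ (1 / β)) ^ (α - β) * M = M ^ (α / β) := by
    rw [← rpow_mul hM.le, ← rpow_add_one hM.ne']
    field_simp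
    ring_nf
  calc ∫⁻ t in A, ENNReal.ofReal (t ^ (α - 1))
      ≤ ENNReal.ofReal ((M ^ (1 / β)) ^ α / α) + ENNReal.ofReal ((M ^ (1 / β)) ^ (α - β)) * m :=
        setLIntegral_rpow_sub_one_le_add hα hαβ hA0 hr
    _ = ENNReal.ofReal ((1 / α + 1) * M ^ (α / β)) := by
        rw [hmM, ← ENNReal.ofReal_mul (by positivity), hrα, hrαβ,
          ← ENNReal.ofReal_add (by positivity) (by positivity)]
        ring_nf
    _ = ENNReal.ofReal (1 / α + 1) * m ^ (α / β) := by
        rw [ENNReal.ofReal_mul (by positivity), hmM, ENNReal.ofReal_rpow_of_pos hM]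

end PowerWeight

noncomputable def volumeIoiRpow (s : ℝ) : Measure ℝ :=
  (volume.restrict (Ioi 0)).withDensity fun t ↦ ENNReal.ofReal (t ^ s)

instance (s : ℝ) : SFinite (volumeIoiRpow s) := by
  unfold volumeIoiRpow
  infer_instance

theorem volumeIoiRpow_apply (s : ℝ) {A : Set ℝ} (hA : MeasurableSet A) :
    volumeIoiRpow s A = ∫⁻ t in A ∩ Ioi 0, ENNReal.ofReal (t ^ s) := by
  rw [volumeIoiRpow, withDensity_apply _ hA, Measure.restrict_restrict hA]

theorem enorm_setIntegral_rpow_smul_le {F : Type*} [NormedAddCommGroup F] [NormedSpace ℝ F]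
    [MeasurableSpace F] [OpensMeasurableSpace F] (s : ℝ) {g : ℝ → F} (hg : Measurable g) :
    ‖∫ t in Ioi 0, t ^ s • g t‖ₑ ≤ ∫⁻ l in Ioi 0, volumeIoiRpow s {t | l < ‖g t‖} := by
  calc ‖∫ t in Ioi 0, t ^ s • g t‖ₑ ≤ ∫⁻ t in Ioi 0, ‖t ^ s • g t‖ₑ :=
        enorm_integral_le_lintegral_enorm _
    _ = ∫⁻ t, ENNReal.ofReal ‖g t‖ ∂volumeIoiRpow s := by
        rw [volumeIoiRpow, lintegral_withDensity_eq_lintegral_mul _ (by fun_prop) (by fun_prop)]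
        refine setLIntegral_congr_fun measurableSet_Ioi fun t ht ↦ ?_
        rw [enorm_smul, ← ofReal_norm, ← ofReal_norm, norm_of_nonneg (rpow_nonneg (le_of_lt ht) _)]
        rfl
    _ = ∫⁻ l in Ioi 0, volumeIoiRpow s {t | l < ‖g t‖} :=
        lintegral_eq_lintegral_meas_lt _ (.of_forall fun _ ↦ norm_nonneg _) hg.norm.aemeasurable

section Polar

variable {E : Type*} [NormedAddCommGroup E] [NormedSpace ℝ E] [FiniteDimensional ℝ E]
  [MeasurableSpace E] [BorelSpace E] (μ : Measure E) [μ.IsAddHaarMeasure]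

theorem lintegral_toSphere_lintegral_Ioi [Nontrivial E] {h : E → ℝ≥0∞} (hh : Measurable h) :
    ∫⁻ ω, (∫⁻ r in Ioi (0 : ℝ), ENNReal.ofReal (r ^ (Module.finrank ℝ E - 1)) * h (r • (ω : E)))
      ∂μ.toSphere = ∫⁻ x, h x ∂μ := by
  have hpolar : Measurable fun q : sphere (0 : E) 1 × Ioi (0 : ℝ) ↦ h ((q.2 : ℝ) • (q.1 : E)) :=
    hh.comp (by fun_prop)
  calc ∫⁻ ω, (∫⁻ r in Ioi (0 : ℝ), ENNReal.ofReal (r ^ (Module.finrank ℝ E - 1)) * h (r • (ω : E)))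
        ∂μ.toSphere
      = ∫⁻ ω, (∫⁻ r, h ((r : ℝ) • (ω : E)) ∂Measure.volumeIoiPow (Module.finrank ℝ E - 1))
          ∂μ.toSphere := by
        refine lintegral_congr fun ω ↦ ?_
        rw [Measure.volumeIoiPow, lintegral_withDensity_eq_lintegral_mul _ (by fun_prop)
          (g := fun r : Ioi (0 : ℝ) ↦ h ((r : ℝ) • (ω : E))) (by fun_prop),
          ← lintegral_subtype_comap measurableSet_Ioi]
        rfl
    _ = ∫⁻ q, h ((q.2 : ℝ) • (q.1 : E))
          ∂μ.toSphere.prod (Measure.volumeIoiPow (Module.finrank ℝ E - 1)) :=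
        (lintegral_prod _ hpolar.aemeasurable).symm
    _ = ∫⁻ x : ({0}ᶜ : Set E), h x ∂μ.comap Subtype.val := by
        rw [← (μ.measurePreserving_homeomorphUnitSphereProd).lintegral_comp hpolar]
        refine lintegral_congr fun x ↦ ?_
        simp [smul_smul, mul_inv_cancel₀ (norm_ne_zero_iff.2 x.2)]
    _ = ∫⁻ x, h x ∂μ := by
        rw [lintegral_subtype_comap (measurableSet_singleton _).compl, restrict_compl_singleton]

theorem lintegral_toSphere_setLIntegral_eq_measure [Nontrivial E] {S : Set E}
    (hS : MeasurableSet S) :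
    ∫⁻ ω, (∫⁻ t in {t : ℝ | t • (ω : E) ∈ S} ∩ Ioi 0,
      ENNReal.ofReal (t ^ ((Module.finrank ℝ E : ℝ) - 1))) ∂μ.toSphere = μ S := by
  have hn : 0 < Module.finrank ℝ E := Module.finrank_pos
  rw [← setLIntegral_one, ← lintegral_indicator hS, ← lintegral_toSphere_lintegral_Ioi μ
    (measurable_const.indicator hS)]
  refine lintegral_congr fun ω ↦ ?_
  have hSω : MeasurableSet {t : ℝ | t • (ω : E) ∈ S} := hS.preimage (by fun_prop)
  rw [← Measure.restrict_restrict hSω, ← lintegral_indicator hSω]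
  refine lintegral_congr fun t ↦ ?_
  by_cases ht : t • (ω : E) ∈ S <;> simp [ht, ← Nat.cast_pred hn]

theorem lintegral_toSphere_volumeIoiRpow_rpow_le {p α : ℝ} (hp : 1 < p)
    (hα : α = Module.finrank ℝ E / p) {S : Set E} (hS : MeasurableSet S) :
    (∫⁻ ω, volumeIoiRpow (α - 1) {t | t • (ω : E) ∈ S} ^ p ∂μ.toSphere) ^ (1 / p) ≤
      ENNReal.ofReal (1 / α + 1) * μ S ^ (1 / p) := by
  have hp0 : 0 < p := one_pos.trans hp
  rcases subsingleton_or_nontrivial E with hE | hE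
  · simp [(μ.toSphere_eq_zero_iff).2 hE, hp0]
  have hn : (0 : ℝ) < Module.finrank ℝ E := Nat.cast_pos.2 Module.finrank_pos
  have hα0 : 0 < α := hα ▸ div_pos hn hp0
  have hαn : α ≤ Module.finrank ℝ E := hα ▸ div_le_self hn.le hp.le
  have hαn' : α / Module.finrank ℝ E = 1 / p := by rw [hα]; field_simp
  set C := ENNReal.ofReal (1 / α + 1)
  have hray (ω : sphere (0 : E) 1) : volumeIoiRpow (α - 1) {t | t • (ω : E) ∈ S} ^ p ≤
      C ^ p * ∫⁻ t in {t : ℝ | t • (ω : E) ∈ S} ∩ Ioi 0,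
        ENNReal.ofReal (t ^ ((Module.finrank ℝ E : ℝ) - 1)) := by
    have hSω : MeasurableSet {t : ℝ | t • (ω : E) ∈ S} := hS.preimage (by fun_prop)
    rw [volumeIoiRpow_apply _ hSω]
    calc _ ≤ (C * (∫⁻ t in {t : ℝ | t • (ω : E) ∈ S} ∩ Ioi 0,
          ENNReal.ofReal (t ^ ((Module.finrank ℝ E : ℝ) - 1))) ^ (1 / p)) ^ p := by
          gcongr
          rw [← hαn']
          exact setLIntegral_rpow_sub_one_le hα0 hαn (hSω.inter measurableSet_Ioi)
            inter_subset_right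
      _ = _ := by
          rw [ENNReal.mul_rpow_of_nonneg _ _ hp0.le, ← ENNReal.rpow_mul, one_div_mul_cancel hp0.ne',
            ENNReal.rpow_one]
  calc (∫⁻ ω, volumeIoiRpow (α - 1) {t | t • (ω : E) ∈ S} ^ p ∂μ.toSphere) ^ (1 / p)
      ≤ (C ^ p * μ S) ^ (1 / p) := by
        rw [← lintegral_toSphere_setLIntegral_eq_measure μ hS,
          ← lintegral_const_mul' _ _ (ENNReal.rpow_ne_top_of_nonneg hp0.le ENNReal.ofReal_ne_top)]
        gcongr with ω
        exact hray ω
    _ = C * μ S ^ (1 / p) := by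
        rw [ENNReal.mul_rpow_of_nonneg _ _ (by positivity), ← ENNReal.rpow_mul,
          mul_one_div_cancel hp0.ne', ENNReal.rpow_one]

theorem lintegral_radial_rpow_le_lorentzNorm₁ {p α : ℝ} (hp : 1 < p)
    (hα : α = Module.finrank ℝ E / p) {f : E → ℂ} (hf : Measurable f) :
    (∫⁻ ω, ENNReal.ofReal ‖∫ t in Ioi (0 : ℝ), t ^ (α - 1) • f (t • (ω : E))‖ ^ p
      ∂μ.toSphere) ^ (1 / p) ≤ ENNReal.ofReal (1 / α + 1) * lorentzNorm₁ μ p f := by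
  have hp0 : 0 < p := one_pos.trans hp
  set G : sphere (0 : E) 1 → ℝ → ℝ≥0∞ := fun ω l ↦
    volumeIoiRpow (α - 1) {t | l < ‖f (t • (ω : E))‖}
  have hG : Measurable (Function.uncurry G) :=
    measurable_measure_prodMk_left
      (s := {q : (sphere (0 : E) 1 × ℝ) × ℝ | q.1.2 < ‖f (q.2 • (q.1.1 : E))‖})
      (measurableSet_lt (by fun_prop) (hf.comp (by fun_prop)).norm)
  calc (∫⁻ ω, ENNReal.ofReal ‖∫ t in Ioi (0 : ℝ), t ^ (α - 1) • f (t • (ω : E))‖ ^ p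
        ∂μ.toSphere) ^ (1 / p)
      ≤ (∫⁻ ω, (∫⁻ l in Ioi 0, G ω l) ^ p ∂μ.toSphere) ^ (1 / p) := by
        gcongr with ω
        rw [ofReal_norm]
        exact enorm_setIntegral_rpow_smul_le _ (hf.comp (by fun_prop))
    _ ≤ ∫⁻ l in Ioi 0, (∫⁻ ω, G ω l ^ p ∂μ.toSphere) ^ (1 / p) :=
        lintegral_Lp_lintegral_le _ _ hp hG
    _ ≤ ∫⁻ l in Ioi 0, ENNReal.ofReal (1 / α + 1) * μ {x | l < ‖f x‖} ^ (1 / p) :=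
        lintegral_mono fun l ↦
          lintegral_toSphere_volumeIoiRpow_rpow_le μ hp hα (S := {x | l < ‖f x‖})
            (measurableSet_lt measurable_const hf.norm)
    _ = ENNReal.ofReal (1 / α + 1) * lorentzNorm₁ μ p f :=
        lintegral_const_mul' _ _ ENNReal.ofReal_ne_top

/-- For `1 < p < ∞` and `α = n/p`, the operator
`B_α f(ω) = ∫₀^∞ f(tω) t^{α-1} dt` maps `L^{p,1}(ℝ^n)` boundedly to `L^p(S^{n-1})`:
`‖B_α f‖_{L^p(S^{n-1})} ≤ C ‖f‖_{L^{p,1}(ℝ^n)}` with `C` independent of `f`. -/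
theorem radial_average_Lp_bound (n : ℕ) (p α : ℝ) (hp : 1 < p) (hα : α = n / p) :
    ∃ C : ℝ≥0∞, C < ⊤ ∧ ∀ f : EuclideanSpace ℝ (Fin n) → ℂ, Measurable f →
      (∫⁻ ω : Metric.sphere (0 : EuclideanSpace ℝ (Fin n)) 1,
          (ENNReal.ofReal
              ‖∫ t in Ioi (0 : ℝ),
                  t ^ (α - 1) • f (t • (ω : EuclideanSpace ℝ (Fin n)))‖) ^ p
          ∂((volume : Measure (EuclideanSpace ℝ (Fin n))).toSphere)) ^ (1 / p)
        ≤ C * lorentzNorm₁ (volume : Measure (EuclideanSpace ℝ (Fin n))) p f :=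
  ⟨ENNReal.ofReal (1 / α + 1), ENNReal.ofReal_lt_top, fun _ hf ↦
    lintegral_radial_rpow_le_lorentzNorm₁ volume hp (by rwa [finrank_euclideanSpace_fin]) hf⟩
end Polar
end

section
/- Let 1 ≤ p < ∞ and f ∈ L^p(R^n) + L^∞(R^n). Then the K-functional satisfies K(t, f; L^p, L^∞) ≈ ( ∫_0^{t^p} (f^*(s))^p ds )^{1/p} with implicit constants independent of f and t, where f^* is the nonincreasing rearrangement of f. -/
/-!
Upper bound: cut `f` radially at the height `a = f^*(t^p)`. The truncated part has sup norm `a`,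
and `t a ≤ (∫₀^{t^p} f^{*p})^{1/p}` because `f^*` is nonincreasing; the remainder
`(‖f‖ - a)⁺` has a rearrangement that vanishes beyond `t^p` and is dominated by `f^*`, so by
equimeasurability its `L^p` norm is also at most `(∫₀^{t^p} f^{*p})^{1/p}`. Hence `K ≤ 2 (…)`.

Lower bound: for any `f = g + h`, with `a = ‖h‖_∞` we have `f^* ≤ ((‖f‖ - a)⁺)^* + a` and
`(‖f‖ - a)⁺ ≤ ‖g‖` a.e.; Minkowski's inequality on `(0, t^p]` and equimeasurability give
`(∫₀^{t^p} f^{*p})^{1/p} ≤ ‖g‖_p + t ‖h‖_∞`.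
-/

open MeasureTheory Set
open scoped ENNReal NNReal

/-- The nonincreasing rearrangement `f^*(s) = inf {λ ≥ 0 : μ{|f| > λ} ≤ s}`. -/
noncomputable def rearrangement {X : Type*} [MeasurableSpace X] (μ : Measure X)
    (f : X → ℂ) (s : ℝ) : ℝ≥0∞ :=
  ⨅ l : {l : ℝ≥0 // μ {x | (l : ℝ) < ‖f x‖} ≤ ENNReal.ofReal s}, (l.1 : ℝ≥0∞)

/-- The Peetre K-functional for the couple `(L^p(μ), L^∞(μ))`:
`K(t,f) = inf {‖g‖_p + t‖h‖_∞ : f = g + h}`. -/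
noncomputable def KfunctionalLpLinfty {X : Type*} [MeasurableSpace X] (μ : Measure X)
    (p : ℝ) (t : ℝ) (f : X → ℂ) : ℝ≥0∞ :=
  ⨅ gh : {gh : (X → ℂ) × (X → ℂ) // f = gh.1 + gh.2},
    eLpNorm gh.1.1 (ENNReal.ofReal p) μ + ENNReal.ofReal t * eLpNorm gh.1.2 ⊤ μ

section Rearrangement

variable {X : Type*} [MeasurableSpace X] {μ : Measure X}

theorem rearrangement_le_coe_of_measure_le {f : X → ℂ} {s : ℝ} {c : ℝ≥0}
    (h : μ {x | (c : ℝ) < ‖f x‖} ≤ ENNReal.ofReal s) : rearrangement μ f s ≤ c :=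
  iInf_le (fun l : {l : ℝ≥0 // μ {x | (l : ℝ) < ‖f x‖} ≤ ENNReal.ofReal s} => (l.1 : ℝ≥0∞))
    ⟨c, h⟩

theorem measure_le_of_rearrangement_lt {f : X → ℂ} {s : ℝ} {c : ℝ≥0}
    (h : rearrangement μ f s < c) : μ {x | (c : ℝ) < ‖f x‖} ≤ ENNReal.ofReal s := by
  obtain ⟨⟨l, hl⟩, hlc⟩ := iInf_lt_iff.1 h
  refine le_trans (measure_mono fun x (hx : (c : ℝ) < ‖f x‖) => ?_) hl
  exact (show (l : ℝ) < c by exact_mod_cast hlc).trans hx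

/-- The distribution function `c ↦ μ {c < ‖f‖}` is right-continuous, so the infimum defining
`rearrangement` is attained. -/
theorem rearrangement_le_coe_iff {f : X → ℂ} {s : ℝ} {c : ℝ≥0} :
    rearrangement μ f s ≤ c ↔ μ {x | (c : ℝ) < ‖f x‖} ≤ ENNReal.ofReal s := by
  refine ⟨fun h => ?_, rearrangement_le_coe_of_measure_le⟩
  have hunion : {x | (c : ℝ) < ‖f x‖} =
      ⋃ n : ℕ, {x | ((c + (n + 1 : ℝ≥0)⁻¹ : ℝ≥0) : ℝ) < ‖f x‖} := by
    ext x
    simp only [mem_ofPred_eq, mem_iUnion]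
    push_cast
    refine ⟨fun hx => ?_, fun ⟨n, hn⟩ => lt_of_le_of_lt (by simp; positivity) hn⟩
    obtain ⟨n, hn⟩ := exists_nat_one_div_lt (sub_pos.2 hx)
    exact ⟨n, by rw [one_div] at hn; linarith⟩
  have hmono : Monotone fun n : ℕ => {x | ((c + (n + 1 : ℝ≥0)⁻¹ : ℝ≥0) : ℝ) < ‖f x‖} := by
    intro m n hmn x (hx : _ < ‖f x‖)
    refine lt_of_le_of_lt ?_ hx
    gcongr
  rw [hunion, hmono.measure_iUnion]
  refine iSup_le fun n => measure_le_of_rearrangement_lt (h.trans_lt ?_)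
  rw [ENNReal.coe_add]
  exact ENNReal.lt_add_right ENNReal.coe_ne_top (by simp)

theorem coe_lt_rearrangement_iff {f : X → ℂ} {s : ℝ} {c : ℝ≥0} :
    (c : ℝ≥0∞) < rearrangement μ f s ↔ ENNReal.ofReal s < μ {x | (c : ℝ) < ‖f x‖} := by
  rw [← not_le, ← not_le, rearrangement_le_coe_iff]

theorem rearrangement_antitone (f : X → ℂ) : Antitone (rearrangement μ f) :=
  fun _ _ hst => le_iInf fun l =>
    rearrangement_le_coe_of_measure_le (l.2.trans (ENNReal.ofReal_le_ofReal hst))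

theorem rearrangement_mono {f g : X → ℂ} (hfg : ∀ x, ‖f x‖ ≤ ‖g x‖) (s : ℝ) :
    rearrangement μ f s ≤ rearrangement μ g s :=
  le_iInf fun l => rearrangement_le_coe_of_measure_le <|
    (measure_mono fun x (hx : (l.1 : ℝ) < ‖f x‖) => hx.trans_le (hfg x)).trans l.2

theorem ae_norm_le_of_eLpNorm_top_le {E : Type*} [NormedAddCommGroup E] {h : X → E} {a : ℝ≥0}
    (ha : eLpNorm h ⊤ μ ≤ a) :
    ∀ᵐ x ∂μ, ‖h x‖ ≤ a := by
  filter_upwards [ae_le_eLpNormEssSup (f := h) (μ := μ)] with x hx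
  rw [← eLpNorm_exponent_top] at hx
  exact_mod_cast (enorm_le_coe.1 (hx.trans ha))

theorem rearrangement_add_le (g h : X → ℂ) (s : ℝ) :
    rearrangement μ (g + h) s ≤ rearrangement μ g s + eLpNorm h ⊤ μ := by
  rcases eq_top_or_lt_top (eLpNorm h ⊤ μ) with htop | hfin
  · simp [htop]
  set a : ℝ≥0 := (eLpNorm h ⊤ μ).toNNReal
  have ha : (a : ℝ≥0∞) = eLpNorm h ⊤ μ := ENNReal.coe_toNNReal hfin.ne
  have hnull : μ {x | (a : ℝ) < ‖h x‖} = 0 := by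
    simpa [ae_iff] using ae_norm_le_of_eLpNorm_top_le ha.ge
  simp only [rearrangement, ← ha, ENNReal.iInf_add]
  refine le_iInf fun l => iInf_le_of_le ⟨l.1 + a, ?_⟩ (ENNReal.coe_add _ _).le
  have hsub : {x | ((l.1 + a : ℝ≥0) : ℝ) < ‖(g + h) x‖} ⊆
      {x | (l.1 : ℝ) < ‖g x‖} ∪ {x | (a : ℝ) < ‖h x‖} := by
    intro x hx
    by_contra hcon
    simp only [mem_union, mem_ofPred_eq, not_or, not_lt, Pi.add_apply] at hx hcon
    push_cast at hx
    linarith [norm_add_le (g x) (h x), hcon.1, hcon.2]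
  calc _ ≤ μ {x | (l.1 : ℝ) < ‖g x‖} + μ {x | (a : ℝ) < ‖h x‖} :=
        (measure_mono hsub).trans (measure_union_le _ _)
    _ ≤ ENNReal.ofReal s := by rw [hnull, add_zero]; exact l.2

/-- By Chebyshev, `μ {n ≤ ‖u‖} ≤ n⁻¹ ^ q ‖u‖_q ^ q → 0`, so eventually `μ {n < ‖u‖} ≤ s`. -/
theorem rearrangement_ne_top_of_eLpNorm_ne_top {u : X → ℂ} (hu : AEStronglyMeasurable u μ)
    {q : ℝ≥0∞} (hq0 : q ≠ 0) (hqtop : q ≠ ⊤) (hfin : eLpNorm u q μ ≠ ⊤) {s : ℝ} (hs : 0 < s) :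
    rearrangement μ u s ≠ ⊤ := by
  have hq : 0 < q.toReal := ENNReal.toReal_pos hq0 hqtop
  have hlim : Filter.Tendsto (fun n : ℕ => (n : ℝ≥0∞)⁻¹ ^ q.toReal * eLpNorm u q μ ^ q.toReal)
      Filter.atTop (nhds 0) := by
    have := ((ENNReal.continuous_rpow_const (y := q.toReal)).tendsto 0).comp
      ENNReal.tendsto_inv_nat_nhds_zero
    rw [ENNReal.zero_rpow_of_pos hq] at this
    simpa using ENNReal.Tendsto.mul_const this (.inr (ENNReal.rpow_ne_top_of_nonneg hq.le hfin))
  obtain ⟨n, hn1, hn⟩ := ((Filter.eventually_ge_atTop 1).and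
    ((tendsto_order.1 hlim).2 _ (ENNReal.ofReal_pos.2 hs))).exists
  refine ne_top_of_le_ne_top ENNReal.coe_ne_top (rearrangement_le_coe_of_measure_le (c := n) ?_)
  refine le_trans (measure_mono fun x (hx : ((n : ℝ≥0) : ℝ) < ‖u x‖) => ?_)
    ((meas_ge_le_mul_pow_eLpNorm_enorm μ hq0 hqtop hu (ε := n) (by simp; omega)
      (by simp)).trans hn.le)
  rw [mem_ofPred_eq, ← ofReal_norm, ← ENNReal.ofReal_natCast]
  exact ENNReal.ofReal_le_ofReal (by exact_mod_cast hx.le)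

theorem volume_setOf_pos_ofReal_lt (D : ℝ≥0∞) :
    volume {s : ℝ | 0 < s ∧ ENNReal.ofReal s < D} = D := by
  rcases eq_top_or_lt_top D with rfl | hD
  · simp only [ENNReal.ofReal_lt_top, and_true]
    exact Real.volume_Ioi
  · have : {s : ℝ | 0 < s ∧ ENNReal.ofReal s < D} = Ioo 0 D.toReal := by
      ext s
      simp only [mem_ofPred_eq, mem_Ioo, and_congr_right_iff]
      exact fun hs => ENNReal.ofReal_lt_iff_lt_toReal hs.le hD.ne
    rw [this, Real.volume_Ioo, sub_zero, ENNReal.ofReal_toReal hD.ne]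

theorem volume_Ioi_inter_coe_lt_rearrangement (u : X → ℂ) (c : ℝ≥0) :
    volume (Ioi 0 ∩ {s | (c : ℝ≥0∞) < rearrangement μ u s}) = μ {x | (c : ℝ) < ‖u x‖} := by
  simp only [coe_lt_rearrangement_iff]
  exact volume_setOf_pos_ofReal_lt _

/-- `u` and `rearrangement μ u` are equimeasurable, so the layer cake formula gives the same
`L^p` norm. -/
theorem eLpNorm_eq_lintegral_rearrangement {u : X → ℂ} (hu : Measurable u) {p : ℝ} (hp : 0 < p)
    (hfin : ∀ s, 0 < s → rearrangement μ u s ≠ ⊤) :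
    eLpNorm u (ENNReal.ofReal p) μ = (∫⁻ s in Ioi 0, rearrangement μ u s ^ p) ^ (1 / p) := by
  rw [eLpNorm_eq_lintegral_rpow_enorm_toReal (by simpa using hp) ENNReal.ofReal_ne_top,
    ENNReal.toReal_ofReal hp.le]
  congr 1
  set R : ℝ → ℝ := fun s => (rearrangement μ u s).toReal
  have hR : ∀ s ∈ Ioi (0 : ℝ), ENNReal.ofReal (R s ^ p) = rearrangement μ u s ^ p := fun s hs => by
    rw [← ENNReal.ofReal_rpow_of_nonneg ENNReal.toReal_nonneg hp.le,
      ENNReal.ofReal_toReal (hfin s hs)]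
  have hdist : ∀ t ∈ Ioi (0 : ℝ),
      volume.restrict (Ioi 0) {s | t < R s} = μ {x | t < ‖u x‖} := fun t ht => by
    rw [Measure.restrict_apply' measurableSet_Ioi, inter_comm]
    have := volume_Ioi_inter_coe_lt_rearrangement (μ := μ) u t.toNNReal
    rw [Real.coe_toNNReal _ (le_of_lt ht)] at this
    rw [← this]
    congr 1
    ext s
    simp only [mem_inter_iff, mem_Ioi, mem_ofPred_eq, and_congr_right_iff]
    exact fun hs => (ENNReal.ofReal_lt_iff_lt_toReal (le_of_lt ht) (hfin s hs)).symm
  rw [← setLIntegral_congr_fun measurableSet_Ioi hR,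
    lintegral_rpow_eq_lintegral_meas_lt_mul _ (ae_of_all _ fun _ => ENNReal.toReal_nonneg)
      (rearrangement_antitone u).measurable.ennreal_toReal.aemeasurable hp]
  rw [lintegral_congr fun x => by
      rw [← ofReal_norm, ENNReal.ofReal_rpow_of_nonneg (norm_nonneg _) hp.le],
    lintegral_rpow_eq_lintegral_meas_lt_mul _ (ae_of_all _ fun _ => norm_nonneg _)
      hu.norm.aemeasurable hp]
  congr 1
  exact setLIntegral_congr_fun measurableSet_Ioi fun t ht => by rw [hdist t ht]

end Rearrangement

section Truncation

variable {X E : Type*} [NormedAddCommGroup E] [NormedSpace ℝ E]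

noncomputable def trunc (f : X → E) (a : ℝ≥0) (x : X) : E :=
  if ‖f x‖ ≤ a then f x else ((a : ℝ) / ‖f x‖) • f x

noncomputable def tail (f : X → E) (a : ℝ≥0) : X → E := f - trunc f a

theorem tail_add_trunc (f : X → E) (a : ℝ≥0) : f = tail f a + trunc f a :=
  (sub_add_cancel f _).symm

theorem norm_trunc_le (f : X → E) (a : ℝ≥0) (x : X) : ‖trunc f a x‖ ≤ a := by
  unfold trunc
  split_ifs with h
  · exact h
  · have hf : 0 < ‖f x‖ := a.2.trans_lt (not_le.1 h)
    rw [norm_smul, Real.norm_of_nonneg (by positivity), div_mul_cancel₀ _ hf.ne']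

theorem norm_tail (f : X → E) (a : ℝ≥0) (x : X) :
    ‖tail f a x‖ = max (‖f x‖ - a) 0 := by
  simp only [tail, trunc, Pi.sub_apply]
  split_ifs with h
  · rw [sub_self, norm_zero, max_eq_right (sub_nonpos.2 h)]
  · have hf : 0 < ‖f x‖ := a.2.trans_lt (not_le.1 h)
    have hle : (a : ℝ) / ‖f x‖ ≤ 1 := (div_le_one hf).2 (not_le.1 h).le
    rw [show f x - ((a : ℝ) / ‖f x‖) • f x = (1 - (a : ℝ) / ‖f x‖) • f x by
      rw [sub_smul, one_smul], norm_smul, Real.norm_of_nonneg (sub_nonneg.2 hle), sub_mul,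
      one_mul, div_mul_cancel₀ _ hf.ne', max_eq_left (sub_nonneg.2 (not_le.1 h).le)]

theorem norm_tail_le (f : X → E) (a : ℝ≥0) (x : X) : ‖tail f a x‖ ≤ ‖f x‖ := by
  rw [norm_tail]
  exact max_le (by linarith [a.2]) (norm_nonneg _)

variable [MeasurableSpace X] {μ : Measure X}

theorem measurable_trunc [MeasurableSpace E] [BorelSpace E] [SecondCountableTopology E]
    {f : X → E} (hf : Measurable f) (a : ℝ≥0) : Measurable (trunc f a) :=
  Measurable.ite (measurableSet_le hf.norm measurable_const) hf
    ((measurable_const.div hf.norm).smul hf)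

theorem measurable_tail [MeasurableSpace E] [BorelSpace E] [SecondCountableTopology E]
    {f : X → E} (hf : Measurable f) (a : ℝ≥0) : Measurable (tail f a) :=
  hf.sub (measurable_trunc hf a)

theorem eLpNorm_top_trunc_le (f : X → E) (a : ℝ≥0) : eLpNorm (trunc f a) ⊤ μ ≤ a := by
  rw [eLpNorm_exponent_top]
  exact eLpNormEssSup_le_of_ae_nnnorm_bound (ae_of_all _ fun x => norm_trunc_le f a x)

theorem eLpNorm_tail_le {f g h : X → E} (hfgh : f = g + h) {a : ℝ≥0}
    (ha : eLpNorm h ⊤ μ ≤ a) (q : ℝ≥0∞) : eLpNorm (tail f a) q μ ≤ eLpNorm g q μ := by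
  refine eLpNorm_mono_ae ?_
  filter_upwards [ae_norm_le_of_eLpNorm_top_le ha] with x hx
  rw [norm_tail, hfgh, Pi.add_apply]
  exact max_le (by linarith [norm_add_le (g x) (h x)]) (norm_nonneg _)

theorem rearrangement_le_rearrangement_tail_add (f : X → ℂ) (a : ℝ≥0) (s : ℝ) :
    rearrangement μ f s ≤ rearrangement μ (tail f a) s + a := by
  conv_lhs => rw [tail_add_trunc f a]
  exact (rearrangement_add_le _ _ s).trans (add_le_add le_rfl (eLpNorm_top_trunc_le f a))

theorem rearrangement_tail_eq_zero {f : X → ℂ} {a : ℝ≥0} {s : ℝ}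
    (hs : μ {x | (a : ℝ) < ‖f x‖} ≤ ENNReal.ofReal s) : rearrangement μ (tail f a) s = 0 := by
  refine nonpos_iff_eq_zero.1 (rearrangement_le_coe_of_measure_le (c := 0) (le_trans ?_ hs))
  refine measure_mono fun x (hx : (0 : ℝ) < ‖tail f a x‖) => ?_
  rw [norm_tail, lt_max_iff, sub_pos, lt_self_iff_false, or_false] at hx
  exact hx

end Truncation

section KFunctional

variable {X : Type*} [MeasurableSpace X] {μ : Measure X}

theorem rearrangement_ne_top_of_eq_add {f g h : X → ℂ} (hf : Measurable f) (hfgh : f = g + h)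
    {q : ℝ≥0∞} (hq0 : q ≠ 0) (hqtop : q ≠ ⊤) (hg : eLpNorm g q μ ≠ ⊤)
    (hh : eLpNorm h ⊤ μ ≠ ⊤) {s : ℝ} (hs : 0 < s) : rearrangement μ f s ≠ ⊤ := by
  set a := (eLpNorm h ⊤ μ).toNNReal
  have htail := rearrangement_ne_top_of_eLpNorm_ne_top (measurable_tail hf a).aestronglyMeasurable
    hq0 hqtop (ne_top_of_le_ne_top hg (eLpNorm_tail_le hfgh (ENNReal.coe_toNNReal hh).ge q)) hs
  exact ne_top_of_le_ne_top (ENNReal.add_ne_top.2 ⟨htail, ENNReal.coe_ne_top⟩)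
    (rearrangement_le_rearrangement_tail_add f a s)

theorem lintegral_Ioc_rpow_const {p t : ℝ} (hp : 0 < p) (ht : 0 ≤ t) (c : ℝ≥0∞) :
    (∫⁻ _ in Ioc 0 (t ^ p), c ^ p) ^ (1 / p) = ENNReal.ofReal t * c := by
  rw [setLIntegral_const, Real.volume_Ioc, sub_zero, ← ENNReal.ofReal_rpow_of_nonneg ht hp.le,
    ← ENNReal.mul_rpow_of_nonneg _ _ hp.le, one_div, ENNReal.rpow_rpow_inv hp.ne', mul_comm]

theorem lintegral_rearrangement_rpow_le_eLpNorm_add {f g h : X → ℂ} (hf : Measurable f)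
    (hfgh : f = g + h) {p : ℝ} (hp : 1 ≤ p) {t : ℝ} (ht : 0 < t) :
    (∫⁻ s in Ioc 0 (t ^ p), rearrangement μ f s ^ p) ^ (1 / p) ≤
      eLpNorm g (ENNReal.ofReal p) μ + ENNReal.ofReal t * eLpNorm h ⊤ μ := by
  have hp0 : 0 < p := by linarith
  rcases eq_top_or_lt_top (eLpNorm h ⊤ μ) with hh | hh
  · simp [hh, ENNReal.mul_top (ENNReal.ofReal_pos.2 ht).ne']
  rcases eq_top_or_lt_top (eLpNorm g (ENNReal.ofReal p) μ) with hg | hg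
  · simp [hg]
  set a := (eLpNorm h ⊤ μ).toNNReal
  have ha : (a : ℝ≥0∞) = eLpNorm h ⊤ μ := ENNReal.coe_toNNReal hh.ne
  have htail : eLpNorm (tail f a) (ENNReal.ofReal p) μ ≤ eLpNorm g (ENNReal.ofReal p) μ :=
    eLpNorm_tail_le hfgh ha.ge _
  have htail_fin : ∀ s, 0 < s → rearrangement μ (tail f a) s ≠ ⊤ := fun s hs =>
    rearrangement_ne_top_of_eLpNorm_ne_top (measurable_tail hf a).aestronglyMeasurable
      (ENNReal.ofReal_pos.2 hp0).ne' ENNReal.ofReal_ne_top (htail.trans_lt hg).ne hs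
  calc (∫⁻ s in Ioc 0 (t ^ p), rearrangement μ f s ^ p) ^ (1 / p)
      ≤ (∫⁻ s in Ioc 0 (t ^ p), (rearrangement μ (tail f a) s + a) ^ p) ^ (1 / p) := by
        gcongr with s
        exact rearrangement_le_rearrangement_tail_add f a s
    _ ≤ (∫⁻ s in Ioc 0 (t ^ p), rearrangement μ (tail f a) s ^ p) ^ (1 / p) +
          (∫⁻ _ in Ioc 0 (t ^ p), (a : ℝ≥0∞) ^ p) ^ (1 / p) :=
        ENNReal.lintegral_Lp_add_le (rearrangement_antitone _).measurable.aemeasurable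
          aemeasurable_const hp
    _ ≤ (∫⁻ s in Ioi 0, rearrangement μ (tail f a) s ^ p) ^ (1 / p) + ENNReal.ofReal t * a := by
        rw [lintegral_Ioc_rpow_const hp0 ht.le]
        gcongr
        exact Ioc_subset_Ioi_self
    _ ≤ eLpNorm g (ENNReal.ofReal p) μ + ENNReal.ofReal t * eLpNorm h ⊤ μ := by
        rw [← eLpNorm_eq_lintegral_rearrangement (measurable_tail hf a) hp0 htail_fin, ha]
        gcongr

theorem lintegral_rearrangement_rpow_le_KfunctionalLpLinfty {f : X → ℂ} (hf : Measurable f)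
    {p : ℝ} (hp : 1 ≤ p) {t : ℝ} (ht : 0 < t) :
    (∫⁻ s in Ioc 0 (t ^ p), rearrangement μ f s ^ p) ^ (1 / p) ≤ KfunctionalLpLinfty μ p t f :=
  le_iInf fun gh => lintegral_rearrangement_rpow_le_eLpNorm_add hf gh.2 hp ht

theorem eLpNorm_tail_le_lintegral_rearrangement {f : X → ℂ} (hf : Measurable f)
    (hfin : ∀ s, 0 < s → rearrangement μ f s ≠ ⊤) {p : ℝ} (hp : 0 < p) {T : ℝ} (hT : 0 < T)
    {a : ℝ≥0} (ha : rearrangement μ f T ≤ a) :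
    eLpNorm (tail f a) (ENNReal.ofReal p) μ ≤
      (∫⁻ s in Ioc 0 T, rearrangement μ f s ^ p) ^ (1 / p) := by
  have htail_le : ∀ s, rearrangement μ (tail f a) s ≤ rearrangement μ f s :=
    rearrangement_mono (norm_tail_le f a)
  have htail_fin : ∀ s, 0 < s → rearrangement μ (tail f a) s ≠ ⊤ := fun s hs =>
    ne_top_of_le_ne_top (hfin s hs) (htail_le s)
  have htail_zero : ∀ s ∈ Ioi T, rearrangement μ (tail f a) s ^ p = 0 := fun s hs => by
    rw [rearrangement_tail_eq_zero ((rearrangement_le_coe_iff.1 ha).trans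
      (ENNReal.ofReal_le_ofReal hs.le)), ENNReal.zero_rpow_of_pos hp]
  rw [eLpNorm_eq_lintegral_rearrangement (measurable_tail hf a) hp htail_fin,
    ← Ioc_union_Ioi_eq_Ioi hT.le, lintegral_union measurableSet_Ioi Ioc_disjoint_Ioi_same,
    setLIntegral_congr_fun measurableSet_Ioi htail_zero, lintegral_zero, add_zero]
  gcongr with s
  exact htail_le s

theorem ofReal_mul_le_lintegral_rearrangement {f : X → ℂ} {p : ℝ} (hp : 0 < p) {t : ℝ}
    (ht : 0 ≤ t) {a : ℝ≥0∞} (ha : a ≤ rearrangement μ f (t ^ p)) :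
    ENNReal.ofReal t * a ≤ (∫⁻ s in Ioc 0 (t ^ p), rearrangement μ f s ^ p) ^ (1 / p) := by
  rw [← lintegral_Ioc_rpow_const hp ht]
  gcongr ?_ ^ _
  refine setLIntegral_mono' measurableSet_Ioc fun s hs => ?_
  gcongr
  exact ha.trans (rearrangement_antitone f hs.2)

theorem KfunctionalLpLinfty_le_two_mul {f : X → ℂ} (hf : Measurable f)
    (hfin : ∀ s, 0 < s → rearrangement μ f s ≠ ⊤) {p : ℝ} (hp : 0 < p) {t : ℝ} (ht : 0 < t) :
    KfunctionalLpLinfty μ p t f ≤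
      2 * (∫⁻ s in Ioc 0 (t ^ p), rearrangement μ f s ^ p) ^ (1 / p) := by
  have hT : 0 < t ^ p := Real.rpow_pos_of_pos ht p
  set a := (rearrangement μ f (t ^ p)).toNNReal
  have ha : (a : ℝ≥0∞) = rearrangement μ f (t ^ p) := ENNReal.coe_toNNReal (hfin _ hT)
  calc KfunctionalLpLinfty μ p t f
      ≤ eLpNorm (tail f a) (ENNReal.ofReal p) μ + ENNReal.ofReal t * eLpNorm (trunc f a) ⊤ μ :=
        iInf_le_of_le ⟨(tail f a, trunc f a), tail_add_trunc f a⟩ le_rfl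
    _ ≤ eLpNorm (tail f a) (ENNReal.ofReal p) μ + ENNReal.ofReal t * a := by
        gcongr
        exact eLpNorm_top_trunc_le f a
    _ ≤ 2 * (∫⁻ s in Ioc 0 (t ^ p), rearrangement μ f s ^ p) ^ (1 / p) := by
        rw [two_mul]
        exact add_le_add (eLpNorm_tail_le_lintegral_rearrangement hf hfin hp hT ha.ge)
          (ofReal_mul_le_lintegral_rearrangement hp ht.le ha.le)

end KFunctional

/-- Holmstedt-type formula: for `1 ≤ p < ∞` and `f ∈ L^p(ℝ^n) + L^∞(ℝ^n)`,
`K(t, f; L^p, L^∞) ≈ (∫₀^{t^p} (f^*(s))^p ds)^{1/p}` with constants independent of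
`f` and `t`. -/
theorem Kfunctional_Lp_Linfty_eq (n : ℕ) (p : ℝ) (hp : 1 ≤ p) :
    ∃ c₁ c₂ : ℝ≥0∞, 0 < c₁ ∧ c₂ < ⊤ ∧
      ∀ f : EuclideanSpace ℝ (Fin n) → ℂ, Measurable f →
      (∃ g h : EuclideanSpace ℝ (Fin n) → ℂ, f = g + h ∧
        eLpNorm g (ENNReal.ofReal p) volume < ⊤ ∧ eLpNorm h ⊤ volume < ⊤) →
      ∀ t : ℝ, 0 < t →
        c₁ * (∫⁻ s in Ioc (0 : ℝ) (t ^ p),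
                (rearrangement volume f s) ^ p) ^ (1 / p)
            ≤ KfunctionalLpLinfty volume p t f ∧
        KfunctionalLpLinfty volume p t f
            ≤ c₂ * (∫⁻ s in Ioc (0 : ℝ) (t ^ p),
                (rearrangement volume f s) ^ p) ^ (1 / p) := by
  have hp0 : 0 < p := by linarith
  refine ⟨1, 2, one_pos, by norm_num, fun f hf ⟨g, h, hfgh, hg, hh⟩ t ht => ⟨?_, ?_⟩⟩
  · rw [one_mul]
    exact lintegral_rearrangement_rpow_le_KfunctionalLpLinfty hf hp ht
  · have hfin : ∀ s, 0 < s → rearrangement volume f s ≠ ⊤ := fun s hs =>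
      rearrangement_ne_top_of_eq_add hf hfgh (ENNReal.ofReal_pos.2 hp0).ne'
        ENNReal.ofReal_ne_top hg.ne hh.ne hs
    exact KfunctionalLpLinfty_le_two_mul hf hfin hp0 ht
end
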